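/- If f belongs to the class 𝓕, then Re(f'(z)) ≥ 27/64 for every z ∈ ℂ with |z| ≤ 1/3. -/

import Mathlib

open Complex Metric

/-- The class 𝓕 of normalized locally univalent analytic functions on the unit disk
satisfying `Re (1 + z f''(z)/f'(z)) > -1/2`. -/
def IsInClassF (f : ℂ → ℂ) : Prop :=
  AnalyticOnNhd ℂ f (ball (0 : ℂ) 1) ∧ f 0 = 0 ∧ deriv f 0 = 1 ∧
    (∀ z ∈ ball (0 : ℂ) 1, deriv f z ≠ 0) ∧
    (∀ z ∈ ball (0 : ℂ) 1, (1 + z * deriv (deriv f) z / deriv f z).re > -(1/2))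

/-- The `n`-th section (partial sum) `s_n(f)(z) = z + ∑_{k=2}^n a_k z^k`, where
`a_k = f^{(k)}(0)/k!`. -/
noncomputable def sectionF (f : ℂ → ℂ) (n : ℕ) (z : ℂ) : ℂ :=
  ∑ k ∈ Finset.Icc 1 n, (iteratedDeriv k f 0 / (Nat.factorial k)) * z ^ k

/-!
Write `f' = (1 + w)⁻³` with `w(0) = 0`, i.e. `w` is a branch of `f'^{-1/3} - 1`. The hypothesis
`Re (1 + z f''/f') > -1/2` becomes `Re (z w' / (1 + w)) < 1/2`, and this forces `|w| < 1` on the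
disk: otherwise let `z₀` maximize `|w|` on a closed disk on which `|w|` reaches `1`; Jack's lemma
gives `z₀ w'(z₀) = k w(z₀)` with `k ≥ 1`, while `Re (w / (1 + w)) ≥ 1/2` whenever `|w| ≥ 1`.
Schwarz's lemma then gives `|w(z)| ≤ |z| ≤ 1/3`, so `u = (1 + w(z))⁻¹` lies in the image
`|u - 9/8| ≤ 3/8` of the disk `|w| ≤ 1/3` under inversion, on which `Re u³ ≥ (3/4)³ = 27/64`.
-/

open Set Filter ComplexConjugate

lemma HasDerivAt.nonneg_of_isLocalMaxOn_Iic {f : ℝ → ℝ} {f' a : ℝ} (hf : HasDerivAt f f' a)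
    (hmax : IsLocalMaxOn f (Iic a) a) : 0 ≤ f' := by
  have hseg : segment ℝ a (a + -1) ⊆ Iic a := by
    rw [segment_symm, segment_eq_Icc (by linarith)]
    exact Icc_subset_Iic_self
  simpa using hmax.hasFDerivWithinAt_nonpos hf.hasFDerivAt.hasFDerivWithinAt
    (mem_posTangentConeAt_of_segment_subset hseg)

theorem im_mul_deriv_mul_conj_eq_zero {W : ℂ → ℂ} {z₀ : ℂ} (hd : DifferentiableAt ℂ W z₀)
    (hmax : ∀ θ : ℝ, ‖W (exp (θ * I) * z₀)‖ ≤ ‖W z₀‖) :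
    (z₀ * deriv W z₀ * conj (W z₀)).im = 0 := by
  have hγ : HasDerivAt (fun θ : ℝ => exp (θ * I) * z₀) (I * z₀) 0 := by
    simpa using ((hasDerivAt_id (0:ℝ)).ofReal_comp.mul_const I).cexp.mul_const z₀
  have hN := (hd.hasDerivAt.comp_of_eq _ hγ (by simp)).norm_sq
  have hloc : IsLocalMax (fun θ : ℝ => ‖W (exp (θ * I) * z₀)‖ ^ 2) 0 :=
    Eventually.of_forall fun θ => by
      simp only [ofReal_zero, zero_mul, exp_zero, one_mul]
      gcongr
      exact hmax θ
  have hN0 := hloc.hasDerivAt_eq_zero hN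
  simp only [Function.comp_apply, ofReal_zero, zero_mul, exp_zero, one_mul, Complex.inner,
    show deriv W z₀ * (I * z₀) * conj (W z₀) = I * (z₀ * deriv W z₀ * conj (W z₀)) by ring,
    I_mul_re] at hN0
  linarith

theorem sq_norm_le_re_mul_deriv_mul_conj {W : ℂ → ℂ} {z₀ : ℂ} (hd : DifferentiableAt ℂ W z₀)
    (hle : ∀ t ∈ Ioo (0 : ℝ) 1, ‖W (t * z₀)‖ ≤ t * ‖W z₀‖) :
    ‖W z₀‖ ^ 2 ≤ (z₀ * deriv W z₀ * conj (W z₀)).re := by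
  have hγ : HasDerivAt (fun t : ℝ => (t : ℂ) * z₀) z₀ 1 := by
    simpa using (hasDerivAt_id (1:ℝ)).ofReal_comp.mul_const z₀
  have hN := ((hd.hasDerivAt.comp_of_eq _ hγ (by simp)).norm_sq).sub
    (((hasDerivAt_id (1:ℝ)).pow 2).const_mul (‖W z₀‖ ^ 2))
  have hloc : IsLocalMaxOn (fun t : ℝ => ‖W (t * z₀)‖ ^ 2 - ‖W z₀‖ ^ 2 * t ^ 2) (Iic 1) 1 := by
    filter_upwards [Ioc_mem_nhdsLE (show (0:ℝ) < 1 by norm_num)] with t ⟨ht0, ht1⟩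
    rcases ht1.eq_or_lt with rfl | ht1
    · simp
    have hWt := hle t ⟨ht0, ht1⟩
    simp only [ofReal_one, one_mul]
    nlinarith [norm_nonneg (W (t * z₀))]
  have hN1 := hN.nonneg_of_isLocalMaxOn_Iic hloc
  simp only [Function.comp_apply, ofReal_one, one_mul, Complex.inner,
    show deriv W z₀ * z₀ * conj (W z₀) = z₀ * deriv W z₀ * conj (W z₀) by ring,
    id_eq, one_pow, mul_one, Nat.cast_ofNat] at hN1
  linarith

/-- Jack's lemma. -/
theorem exists_one_le_mul_deriv_eq_of_forall_norm_le {W : ℂ → ℂ} {z₀ : ℂ}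
    (hd : DifferentiableOn ℂ W (ball 0 ‖z₀‖)) (hdz₀ : DifferentiableAt ℂ W z₀) (h0 : W 0 = 0)
    (hmax : ∀ y ∈ closedBall 0 ‖z₀‖, ‖W y‖ ≤ ‖W z₀‖) (hWz₀ : W z₀ ≠ 0) :
    ∃ k : ℝ, 1 ≤ k ∧ z₀ * deriv W z₀ = k * W z₀ := by
  have hr : 0 < ‖z₀‖ := norm_pos_iff.2 (by rintro rfl; exact hWz₀ h0)
  have hschwarz : ∀ t ∈ Ioo (0 : ℝ) 1, ‖W (t * z₀)‖ ≤ t * ‖W z₀‖ := fun t ht => by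
    have hty : ‖(t : ℂ) * z₀‖ = t * ‖z₀‖ := by simp [abs_of_pos ht.1]
    have := Complex.dist_le_div_mul_dist_of_mapsTo_ball hd
      (fun y hy => by simpa [h0] using hmax y (ball_subset_closedBall hy))
      (mem_ball_zero_iff.2 (by rw [hty]; nlinarith [ht.2]) : (t : ℂ) * z₀ ∈ ball 0 ‖z₀‖)
    rw [h0, dist_zero_right, dist_zero_right, hty] at this
    field_simp at this
    linarith
  set k : ℂ := z₀ * deriv W z₀ * conj (W z₀)
  have him : k.im = 0 := im_mul_deriv_mul_conj_eq_zero hdz₀ fun θ =>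
    hmax _ (by simp [norm_exp_ofReal_mul_I])
  have hre : ‖W z₀‖ ^ 2 ≤ k.re := sq_norm_le_re_mul_deriv_mul_conj hdz₀ hschwarz
  have hk : ((k.re : ℝ) : ℂ) = k := Complex.ext rfl (by simp [him])
  have hWW : W z₀ * conj (W z₀) = ((‖W z₀‖ ^ 2 : ℝ) : ℂ) := by
    rw [mul_conj, normSq_eq_norm_sq]
  have hM2 : 0 < ‖W z₀‖ ^ 2 := by positivity
  refine ⟨k.re / ‖W z₀‖ ^ 2, (one_le_div hM2).2 hre, ?_⟩
  rw [ofReal_div, hk, div_mul_eq_mul_div, eq_div_iff (by exact_mod_cast hM2.ne'), ← hWW]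
  ring

lemma one_half_le_re_div_one_add {w : ℂ} (hw : 1 ≤ ‖w‖) (hne : 1 + w ≠ 0) :
    1 / 2 ≤ (w / (1 + w)).re := by
  have hw2 : 1 ≤ normSq w := by rw [normSq_eq_norm_sq]; nlinarith
  rw [div_re, ← add_div, le_div_iff₀ (normSq_pos.2 hne), normSq_apply]
  rw [normSq_apply] at hw2
  simp only [add_re, add_im, one_re, one_im]
  nlinarith

theorem mapsTo_ball_of_re_mul_deriv_div_one_add_lt {W : ℂ → ℂ} {R : ℝ}
    (hd : DifferentiableOn ℂ W (ball 0 R)) (h0 : W 0 = 0)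
    (hne : ∀ z ∈ ball 0 R, 1 + W z ≠ 0)
    (hre : ∀ z ∈ ball 0 R, (z * deriv W z / (1 + W z)).re < 1 / 2) :
    MapsTo W (ball 0 R) (ball 0 1) := by
  intro z₁ hz₁
  rw [mem_ball_zero_iff]
  by_contra! h₁
  have hK : closedBall (0 : ℂ) ‖z₁‖ ⊆ ball 0 R := closedBall_subset_ball (mem_ball_zero_iff.1 hz₁)
  obtain ⟨z₀, hz₀K, hz₀max⟩ := (isCompact_closedBall (0 : ℂ) ‖z₁‖).exists_isMaxOn
    ⟨z₁, by simp⟩ (hd.continuousOn.mono hK).norm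
  have hz₀ : z₀ ∈ ball 0 R := hK hz₀K
  have hM : 1 ≤ ‖W z₀‖ := h₁.trans (hz₀max (by simp))
  obtain ⟨k, hk, hkW⟩ := exists_one_le_mul_deriv_eq_of_forall_norm_le
    (hd.mono (ball_subset_ball (mem_ball_zero_iff.1 hz₀).le))
    (hd.differentiableAt (isOpen_ball.mem_nhds hz₀)) h0
    (fun y hy => hz₀max (closedBall_subset_closedBall (mem_closedBall_zero_iff.1 hz₀K) hy))
    (norm_pos_iff.1 (by linarith))
  have hlt := hre z₀ hz₀
  rw [hkW, mul_div_assoc, re_ofReal_mul] at hlt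
  nlinarith [one_half_le_re_div_one_add hM (hne z₀ hz₀)]

theorem DifferentiableOn.exists_hasDerivAt_logDeriv_exp_eq {u : ℂ → ℂ} {c : ℂ} {r : ℝ}
    (hu : DifferentiableOn ℂ u (ball c r)) (hne : ∀ z ∈ ball c r, u z ≠ 0) :
    ∃ φ : ℂ → ℂ, φ c = Complex.log (u c) ∧
      ∀ z ∈ ball c r, HasDerivAt φ (logDeriv u z) z ∧ Complex.exp (φ z) = u z := by
  have hlog : DifferentiableOn ℂ (logDeriv u) (ball c r) :=
    (hu.deriv isOpen_ball).div hu hne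
  obtain ⟨φ, hφc, hφ⟩ := hlog.isExactOn_ball.with_val_at c (Complex.log (u c))
  refine ⟨φ, hφc, fun z hz => ⟨hφ z hz, ?_⟩⟩
  have hc : c ∈ ball c r := mem_ball_self (pos_of_mem_ball hz)
  have hderiv : ∀ y ∈ ball c r, HasDerivAt (fun y => u y * Complex.exp (-φ y)) 0 y :=
    fun y hy => by
      have hdu := (hu.differentiableAt (isOpen_ball.mem_nhds hy)).hasDerivAt
      refine (hdu.mul (hφ y hy).neg.cexp).congr_deriv ?_
      rw [logDeriv_apply]
      field_simp [hne y hy]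
      ring
  have hconst := isOpen_ball.is_const_of_deriv_eq_zero (convex_ball c r).isPreconnected
    (fun y hy => (hderiv y hy).differentiableAt.differentiableWithinAt)
    (fun y hy => (hderiv y hy).deriv) hz hc
  rw [hφc, Complex.exp_neg, Complex.exp_neg, Complex.exp_log (hne c hc),
    mul_inv_cancel₀ (hne c hc)] at hconst
  exact (eq_of_mul_inv_eq_one hconst).symm

theorem IsInClassF.exists_deriv_eq_inv_one_add_pow_three {f : ℂ → ℂ} (hf : IsInClassF f) :
    ∃ W : ℂ → ℂ, DifferentiableOn ℂ W (ball 0 1) ∧ W 0 = 0 ∧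
      ∀ z ∈ ball (0 : ℂ) 1, 1 + W z ≠ 0 ∧ (z * deriv W z / (1 + W z)).re < 1 / 2 ∧
        deriv f z = ((1 + W z)⁻¹) ^ 3 := by
  obtain ⟨hA, -, hf'0, hne, hre⟩ := hf
  obtain ⟨φ, hφ0, hφ⟩ := hA.deriv.differentiableOn.exists_hasDerivAt_logDeriv_exp_eq hne
  rw [hf'0, Complex.log_one] at hφ0
  have hW : ∀ z ∈ ball (0 : ℂ) 1, HasDerivAt (fun z => Complex.exp (-φ z / 3) - 1)
      (Complex.exp (-φ z / 3) * (-logDeriv (deriv f) z / 3)) z :=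
    fun z hz => (((hφ z hz).1.neg.div_const 3).cexp).sub_const 1
  refine ⟨fun z => Complex.exp (-φ z / 3) - 1,
    fun z hz => (hW z hz).differentiableAt.differentiableWithinAt, by simp [hφ0],
    fun z hz => ⟨by simp [Complex.exp_ne_zero], ?_, ?_⟩⟩
  · have h := hre z hz
    rw [(hW z hz).deriv, add_sub_cancel, mul_left_comm,
      mul_div_cancel_left₀ _ (Complex.exp_ne_zero _)]
    rw [mul_div_assoc, ← logDeriv_apply] at h
    simp only [add_re, one_re, mul_re, gt_iff_lt, div_ofNat_re, neg_re, div_ofNat_im,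
      neg_im] at h ⊢
    linarith
  · rw [← (hφ z hz).2, add_sub_cancel, ← Complex.exp_neg, ← Complex.exp_nat_mul]
    ring_nf

lemma norm_inv_one_add_sub_le {w : ℂ} {ρ : ℝ} (hρ : ρ < 1) (hw : ‖w‖ ≤ ρ) :
    ‖(1 + w)⁻¹ - ((1 - ρ ^ 2 : ℝ) : ℂ)⁻¹‖ ≤ ρ / (1 - ρ ^ 2) := by
  have hρ0 : 0 ≤ ρ := (norm_nonneg w).trans hw
  have hc : 0 < 1 - ρ ^ 2 := by nlinarith
  have hne : 1 + w ≠ 0 := by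
    intro h
    rw [eq_neg_of_add_eq_zero_right h, norm_neg, norm_one] at hw
    linarith
  have key : ‖(ρ ^ 2 : ℂ) + w‖ ≤ ρ * ‖1 + w‖ := by
    have hw2 : normSq w ≤ ρ ^ 2 := by rw [normSq_eq_norm_sq]; gcongr
    rw [← pow_le_pow_iff_left₀ (norm_nonneg _) (by positivity) two_ne_zero, mul_pow,
      ← normSq_eq_norm_sq, ← normSq_eq_norm_sq, normSq_apply, normSq_apply]
    rw [normSq_apply] at hw2
    simp only [add_re, add_im, one_re, one_im, ← ofReal_pow, ofReal_re, ofReal_im]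
    nlinarith [mul_nonneg (sub_nonneg.2 hw2) hc.le]
  have hcC : ((1 - ρ ^ 2 : ℝ) : ℂ) ≠ 0 := by exact_mod_cast hc.ne'
  rw [inv_sub_inv hne hcC, norm_div, norm_mul, norm_real, Real.norm_of_nonneg hc.le,
    div_le_div_iff₀ (by positivity) hc]
  have hnum : ((1 - ρ ^ 2 : ℝ) : ℂ) - (1 + w) = -((ρ : ℂ) ^ 2 + w) := by push_cast; ring
  rw [hnum, norm_neg, ← mul_assoc]
  exact mul_le_mul_of_nonneg_right key hc.le

lemma le_re_pow_three_of_norm_sub_le {u : ℂ} (hu : ‖u - 9 / 8‖ ≤ 3 / 8) : 27 / 64 ≤ (u ^ 3).re := by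
  have hdisk : (u.re - 9 / 8) ^ 2 + u.im ^ 2 ≤ 9 / 64 := by
    have := pow_le_pow_left₀ (norm_nonneg _) hu 2
    rw [← normSq_eq_norm_sq, normSq_apply] at this
    simp only [sub_re, sub_im] at this
    norm_num at this
    nlinarith
  have hre : 3 / 4 ≤ u.re := by nlinarith [sq_nonneg u.im]
  have hpow : (u ^ 3).re = u.re ^ 3 - 3 * u.re * u.im ^ 2 := by
    simp only [pow_succ, pow_zero, one_mul, mul_re, mul_im]; ring
  rw [hpow]
  -- `Re u³ - 27/64 = 4 (x - 3/4)² (x - 3/16) + 3 x (9/64 - (x - 9/8)² - y²)` for `u = x + i y`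
  nlinarith [mul_nonneg (by linarith : (0:ℝ) ≤ u.re)
      (by linarith : 0 ≤ 9 / 64 - (u.re - 9 / 8) ^ 2 - u.im ^ 2),
    mul_nonneg (sq_nonneg (u.re - 3 / 4)) (by linarith : (0:ℝ) ≤ u.re - 3 / 16)]

theorem re_deriv_ge (f : ℂ → ℂ) (hf : IsInClassF f) (z : ℂ)
    (hz : ‖z‖ ≤ 1/3) :
    27/64 ≤ (deriv f z).re := by
  obtain ⟨W, hWd, hW0, hW⟩ := hf.exists_deriv_eq_inv_one_add_pow_three
  have hz1 : z ∈ ball (0 : ℂ) 1 := mem_ball_zero_iff.2 (by linarith)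
  have hmaps : MapsTo W (ball 0 1) (ball 0 1) :=
    mapsTo_ball_of_re_mul_deriv_div_one_add_lt hWd hW0 (fun z hz => (hW z hz).1)
      (fun z hz => (hW z hz).2.1)
  have hWz : ‖W z‖ ≤ 1 / 3 := (Complex.norm_le_norm_of_mapsTo_ball hWd
    (hmaps.mono_right ball_subset_closedBall) hW0 (mem_ball_zero_iff.1 hz1)).trans hz
  rw [(hW z hz1).2.2]
  refine le_re_pow_three_of_norm_sub_le ?_
  have := norm_inv_one_add_sub_le (by norm_num : (1 / 3 : ℝ) < 1) hWz
  norm_num at this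
  exact this
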